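/- Let R be a ring such that every injective left R-module has finite flat dimension. Then every acyclic complex F^• of flat right R-modules is F-totally acyclic, i.e., F^• ⊗_R J is acyclic for every injective left R-module J. -/

import Mathlib

/-!
Tensoring with a flat left module preserves exactness of `F^•`, so `F^• ⊗_R G` is acyclic for
every flat `G`. If `J` has a flat resolution of length `m + 1`, its first syzygy `K` in
`0 → K → G → J → 0` (with `G` flat) has one of length `m`. As the terms of `F^•` are flat,
`0 → F^• ⊗_R K → F^• ⊗_R G → F^• ⊗_R J → 0` is a short exact sequence of complexes, and the
piece `Hⁿ(F^• ⊗_R G) → Hⁿ(F^• ⊗_R J) → Hⁿ⁺¹(F^• ⊗_R K)` of its long exact homology sequence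
gives the acyclicity of `F^• ⊗_R J` by induction on `m`.
-/

open CategoryTheory TensorProduct

universe u

set_option maxHeartbeats 1000000
noncomputable section

namespace NCT

variable (R : Type u) [Ring R]

/-- The subgroup of relations defining the balanced tensor product `M ⊗_R N`
of a right `R`-module `M` and a left `R`-module `N`. -/
def rel (M N : Type u) [AddCommGroup M] [Module Rᵐᵒᵖ M] [AddCommGroup N] [Module R N] :
    AddSubgroup (M ⊗[ℤ] N) :=
  AddSubgroup.closure {x | ∃ (r : R) (m : M) (n : N),
    x = (MulOpposite.op r • m) ⊗ₜ[ℤ] n - m ⊗ₜ[ℤ] (r • n)}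

/-- The balanced tensor product `M ⊗_R N` over a (possibly noncommutative) ring `R`. -/
def Tens (M N : Type u) [AddCommGroup M] [Module Rᵐᵒᵖ M] [AddCommGroup N] [Module R N] :
    Type u :=
  (M ⊗[ℤ] N) ⧸ rel R M N

instance (M N : Type u) [AddCommGroup M] [Module Rᵐᵒᵖ M] [AddCommGroup N] [Module R N] :
    AddCommGroup (Tens R M N) :=
  inferInstanceAs (AddCommGroup ((M ⊗[ℤ] N) ⧸ rel R M N))

variable {R}

variable {M M' M'' N N' N'' : Type u}
  [AddCommGroup M] [Module Rᵐᵒᵖ M] [AddCommGroup M'] [Module Rᵐᵒᵖ M']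
  [AddCommGroup M''] [Module Rᵐᵒᵖ M'']
  [AddCommGroup N] [Module R N] [AddCommGroup N'] [Module R N']
  [AddCommGroup N''] [Module R N'']

/-- The canonical projection. -/
def mk : M ⊗[ℤ] N →+ Tens R M N := QuotientAddGroup.mk' (rel R M N)

lemma mk_surjective : Function.Surjective (mk (R := R) (M := M) (N := N)) :=
  QuotientAddGroup.mk'_surjective _

private def intMap (f : M →ₗ[Rᵐᵒᵖ] M') (g : N →ₗ[R] N') : M ⊗[ℤ] N →ₗ[ℤ] M' ⊗[ℤ] N' :=
  TensorProduct.map f.toAddMonoidHom.toIntLinearMap g.toAddMonoidHom.toIntLinearMap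

private lemma intMap_id :
    intMap (LinearMap.id : M →ₗ[Rᵐᵒᵖ] M) (LinearMap.id : N →ₗ[R] N) = LinearMap.id :=
  TensorProduct.ext' fun _ _ => rfl

private lemma intMap_comp (f' : M' →ₗ[Rᵐᵒᵖ] M'') (f : M →ₗ[Rᵐᵒᵖ] M')
    (g' : N' →ₗ[R] N'') (g : N →ₗ[R] N') :
    intMap (f'.comp f) (g'.comp g) = (intMap f' g').comp (intMap f g) :=
  TensorProduct.ext' fun _ _ => rfl

private lemma rel_le (f : M →ₗ[Rᵐᵒᵖ] M') (g : N →ₗ[R] N') :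
    rel R M N ≤ (rel R M' N').comap (intMap f g).toAddMonoidHom := by
  rw [rel, AddSubgroup.closure_le]
  rintro x ⟨r, m, n, rfl⟩
  simp only [SetLike.mem_coe, AddSubgroup.mem_comap, LinearMap.toAddMonoidHom_coe, map_sub]
  apply AddSubgroup.subset_closure
  refine ⟨r, f m, g n, ?_⟩
  show f (MulOpposite.op r • m) ⊗ₜ[ℤ] g n - f m ⊗ₜ[ℤ] g (r • n) = _
  rw [map_smul, map_smul]

/-- Functoriality of the balanced tensor product. -/
def tmap (f : M →ₗ[Rᵐᵒᵖ] M') (g : N →ₗ[R] N') : Tens R M N →+ Tens R M' N' :=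
  QuotientAddGroup.map _ _ (intMap f g).toAddMonoidHom (rel_le f g)

lemma tmap_mk (f : M →ₗ[Rᵐᵒᵖ] M') (g : N →ₗ[R] N') (x : M ⊗[ℤ] N) :
    tmap f g (mk x) = mk (intMap f g x) := rfl

lemma tmap_id_apply (x : Tens R M N) :
    tmap (LinearMap.id : M →ₗ[Rᵐᵒᵖ] M) (LinearMap.id : N →ₗ[R] N) x = x := by
  obtain ⟨y, rfl⟩ := mk_surjective x
  rw [tmap_mk, intMap_id]
  rfl

lemma tmap_tmap (f' : M' →ₗ[Rᵐᵒᵖ] M'') (f : M →ₗ[Rᵐᵒᵖ] M')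
    (g' : N' →ₗ[R] N'') (g : N →ₗ[R] N') (x : Tens R M N) :
    tmap f' g' (tmap f g x) = tmap (f'.comp f) (g'.comp g) x := by
  obtain ⟨y, rfl⟩ := mk_surjective x
  rw [tmap_mk, tmap_mk, tmap_mk, intMap_comp]
  rfl

lemma tmap_add_left (f₁ f₂ : M →ₗ[Rᵐᵒᵖ] M') (g : N →ₗ[R] N') :
    tmap (f₁ + f₂) g = tmap f₁ g + tmap f₂ g := by
  ext x
  obtain ⟨y, rfl⟩ := mk_surjective x
  have h : intMap (f₁ + f₂) g = intMap f₁ g + intMap f₂ g := by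
    apply TensorProduct.ext'
    intro m n
    show (f₁ + f₂) m ⊗ₜ[ℤ] g n = f₁ m ⊗ₜ[ℤ] g n + f₂ m ⊗ₜ[ℤ] g n
    rw [LinearMap.add_apply, add_tmul]
  simp only [AddMonoidHom.add_apply, tmap_mk, h, LinearMap.add_apply]
  rw [map_add]

lemma tmap_add_right (f : M →ₗ[Rᵐᵒᵖ] M') (g₁ g₂ : N →ₗ[R] N') :
    tmap f (g₁ + g₂) = tmap f g₁ + tmap f g₂ := by
  ext x
  obtain ⟨y, rfl⟩ := mk_surjective x
  have h : intMap f (g₁ + g₂) = intMap f g₁ + intMap f g₂ := by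
    apply TensorProduct.ext'
    intro m n
    show f m ⊗ₜ[ℤ] (g₁ + g₂) n = f m ⊗ₜ[ℤ] g₁ n + f m ⊗ₜ[ℤ] g₂ n
    rw [LinearMap.add_apply, tmul_add]
  simp only [AddMonoidHom.add_apply, tmap_mk, h, LinearMap.add_apply]
  rw [map_add]


lemma tmap_zero_left (g : N →ₗ[R] N') :
    tmap (0 : M →ₗ[Rᵐᵒᵖ] M') g = 0 := by
  ext x
  obtain ⟨y, rfl⟩ := mk_surjective x
  have h : intMap (0 : M →ₗ[Rᵐᵒᵖ] M') g = 0 := by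
    apply TensorProduct.ext'
    intro m n
    show (0 : M →ₗ[Rᵐᵒᵖ] M') m ⊗ₜ[ℤ] g n = 0
    rw [LinearMap.zero_apply, zero_tmul]
  rw [tmap_mk, h]
  rfl

lemma tmap_zero_right (f : M →ₗ[Rᵐᵒᵖ] M') :
    tmap f (0 : N →ₗ[R] N') = 0 := by
  ext x
  obtain ⟨y, rfl⟩ := mk_surjective x
  have h : intMap f (0 : N →ₗ[R] N') = 0 := by
    apply TensorProduct.ext'
    intro m n
    show f m ⊗ₜ[ℤ] (0 : N →ₗ[R] N') n = 0
    rw [LinearMap.zero_apply, tmul_zero]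
  rw [tmap_mk, h]
  rfl

variable (R)

/-- The balanced tensor product, as a bifunctor on module categories. -/
def tensorBifunctor : ModuleCat.{u} Rᵐᵒᵖ ⥤ ModuleCat.{u} R ⥤ AddCommGrpCat.{u} where
  obj M :=
    { obj := fun N => AddCommGrpCat.of (Tens R M N)
      map := fun g => AddCommGrpCat.ofHom (tmap LinearMap.id g.hom)
      map_id := fun N => by
        ext x
        show tmap LinearMap.id LinearMap.id x = x
        exact tmap_id_apply x
      map_comp := fun g g' => by
        ext x
        show tmap LinearMap.id (LinearMap.comp g'.hom g.hom) x
          = tmap LinearMap.id g'.hom (tmap LinearMap.id g.hom x)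
        rw [tmap_tmap, LinearMap.id_comp] }
  map f :=
    { app := fun N => AddCommGrpCat.ofHom (tmap f.hom LinearMap.id)
      naturality := fun N N' g => by
        ext x
        show tmap f.hom LinearMap.id (tmap LinearMap.id g.hom x)
          = tmap LinearMap.id g.hom (tmap f.hom LinearMap.id x)
        rw [tmap_tmap, tmap_tmap, LinearMap.id_comp, LinearMap.comp_id,
          LinearMap.id_comp, LinearMap.comp_id] }
  map_id := fun M => by
    ext N x
    show tmap LinearMap.id LinearMap.id x = x
    exact tmap_id_apply x
  map_comp := fun f f' => by
    ext N x
    show tmap (LinearMap.comp f'.hom f.hom) LinearMap.id x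
      = tmap f'.hom LinearMap.id (tmap f.hom LinearMap.id x)
    rw [tmap_tmap, LinearMap.id_comp]

instance (M : ModuleCat.{u} Rᵐᵒᵖ) : ((tensorBifunctor R).obj M).Additive where
  map_add := by
    intro N N' g g'
    ext x
    show tmap LinearMap.id (g + g').hom x = _
    rw [ModuleCat.hom_add, tmap_add_right]
    rfl

instance (N : ModuleCat.{u} R) : ((tensorBifunctor R).flip.obj N).Additive where
  map_add := by
    intro M M' f f'
    ext x
    show tmap (f + f').hom LinearMap.id x = _
    rw [ModuleCat.hom_add, tmap_add_left]
    rfl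


instance : (tensorBifunctor R).PreservesZeroMorphisms where
  map_zero := by
    intro M M'
    ext N x
    show tmap (0 : ↑M →ₗ[Rᵐᵒᵖ] ↑M') LinearMap.id x = 0
    rw [tmap_zero_left]
    rfl

/-- A right `R`-module `M` is flat if `M ⊗_R -` preserves injectivity. -/
def FlatRight (M : Type u) [AddCommGroup M] [Module Rᵐᵒᵖ M] : Prop :=
  ∀ (N N' : Type u) [AddCommGroup N] [Module R N] [AddCommGroup N'] [Module R N']
    (g : N →ₗ[R] N'), Function.Injective g →
      Function.Injective (tmap (LinearMap.id : M →ₗ[Rᵐᵒᵖ] M) g)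

/-- A left `R`-module `N` is flat if `- ⊗_R N` preserves injectivity. -/
def FlatLeft (N : Type u) [AddCommGroup N] [Module R N] : Prop :=
  ∀ (M M' : Type u) [AddCommGroup M] [Module Rᵐᵒᵖ M] [AddCommGroup M'] [Module Rᵐᵒᵖ M']
    (f : M →ₗ[Rᵐᵒᵖ] M'), Function.Injective f →
      Function.Injective (tmap f (LinearMap.id : N →ₗ[R] N))

end NCT

open CategoryTheory Limits

/-- A left `R`-module has finite flat dimension if it admits a finite resolution by flat
left `R`-modules. -/
def HasFiniteFlatDimension (R : Type u) [Ring R] (J : Type u) [AddCommGroup J]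
    [Module R J] : Prop :=
  ∃ (m : ℕ) (G : ℕ → ModuleCat.{u} R) (d : ∀ n : ℕ, G (n + 1) ⟶ G n)
    (ε : G 0 ⟶ ModuleCat.of R J),
    (∀ n, NCT.FlatLeft R (G n)) ∧
    Function.Surjective ε ∧
    LinearMap.range (d 0).hom = LinearMap.ker ε.hom ∧
    (∀ n, LinearMap.range (d (n + 1)).hom = LinearMap.ker (d n).hom) ∧
    (∀ n, m < n → Subsingleton (G n))

/-- The complex of abelian groups `F^• ⊗_R N` obtained by tensoring a complex of right
`R`-modules termwise with a left `R`-module `N`. -/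
noncomputable def tensCplx {R : Type u} [Ring R]
    (Fc : CochainComplex (ModuleCat.{u} Rᵐᵒᵖ) ℤ) (N : ModuleCat.{u} R) :
    CochainComplex AddCommGrpCat.{u} ℤ :=
  (((NCT.tensorBifunctor R).flip.obj N).mapHomologicalComplex (ComplexShape.up ℤ)).obj Fc


namespace NCT

variable {R : Type u} [Ring R]
variable {M M' M'' N N' N'' : Type u}
  [AddCommGroup M] [Module Rᵐᵒᵖ M] [AddCommGroup M'] [Module Rᵐᵒᵖ M']
  [AddCommGroup M''] [Module Rᵐᵒᵖ M'']
  [AddCommGroup N] [Module R N] [AddCommGroup N'] [Module R N']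
  [AddCommGroup N''] [Module R N'']

lemma mk_eq_zero_iff {x : M ⊗[ℤ] N} : (mk x : Tens R M N) = 0 ↔ x ∈ rel R M N :=
  QuotientAddGroup.eq_zero_iff x

private lemma intMap_id_left (g : N →ₗ[R] N') :
    intMap (LinearMap.id : M →ₗ[Rᵐᵒᵖ] M) g =
      LinearMap.lTensor M g.toAddMonoidHom.toIntLinearMap :=
  TensorProduct.ext' fun _ _ => rfl

private lemma intMap_id_right (f : M →ₗ[Rᵐᵒᵖ] M') :
    intMap f (LinearMap.id : N →ₗ[R] N) =
      LinearMap.rTensor N f.toAddMonoidHom.toIntLinearMap :=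
  TensorProduct.ext' fun _ _ => rfl

lemma tmap_comm (f : M →ₗ[Rᵐᵒᵖ] M') (g : N →ₗ[R] N') (x : Tens R M N) :
    tmap LinearMap.id g (tmap f LinearMap.id x) =
      tmap f LinearMap.id (tmap LinearMap.id g x) := by
  rw [tmap_tmap, tmap_tmap, LinearMap.id_comp, LinearMap.comp_id, LinearMap.id_comp,
    LinearMap.comp_id]

lemma tmap_tmap_id_left_eq_zero {g : N →ₗ[R] N'} {g' : N' →ₗ[R] N''} (h : g'.comp g = 0)
    (x : Tens R M N) : tmap LinearMap.id g' (tmap LinearMap.id g x) = 0 := by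
  rw [tmap_tmap, h, tmap_zero_right]
  rfl

lemma tmap_tmap_id_right_eq_zero {f : M →ₗ[Rᵐᵒᵖ] M'} {f' : M' →ₗ[Rᵐᵒᵖ] M''} (h : f'.comp f = 0)
    (x : Tens R M N) : tmap f' LinearMap.id (tmap f LinearMap.id x) = 0 := by
  rw [tmap_tmap, h, tmap_zero_left]
  rfl

lemma tmap_id_left_surjective {g : N →ₗ[R] N'} (hg : Function.Surjective g) :
    Function.Surjective (tmap (LinearMap.id : M →ₗ[Rᵐᵒᵖ] M) g) := by
  intro x
  obtain ⟨z, rfl⟩ := mk_surjective x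
  obtain ⟨w, hw⟩ := LinearMap.lTensor_surjective M (g := g.toAddMonoidHom.toIntLinearMap) hg z
  exact ⟨mk w, by rw [tmap_mk, intMap_id_left]; exact congrArg mk hw⟩

lemma tmap_id_right_surjective {f : M →ₗ[Rᵐᵒᵖ] M'} (hf : Function.Surjective f) :
    Function.Surjective (tmap f (LinearMap.id : N →ₗ[R] N)) := by
  intro x
  obtain ⟨z, rfl⟩ := mk_surjective x
  obtain ⟨w, hw⟩ := LinearMap.rTensor_surjective N (g := f.toAddMonoidHom.toIntLinearMap) hf z
  exact ⟨mk w, by rw [tmap_mk, intMap_id_right]; exact congrArg mk hw⟩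

private lemma rel_le_map_id_left {g : N →ₗ[R] N'} (hg : Function.Surjective g) :
    rel R M N' ≤ (rel R M N).map (intMap (LinearMap.id : M →ₗ[Rᵐᵒᵖ] M) g).toAddMonoidHom := by
  rw [rel, AddSubgroup.closure_le]
  rintro x ⟨r, m, n', rfl⟩
  obtain ⟨n, rfl⟩ := hg n'
  refine ⟨_, AddSubgroup.subset_closure ⟨r, m, n, rfl⟩, ?_⟩
  show (MulOpposite.op r • m) ⊗ₜ[ℤ] g n - m ⊗ₜ[ℤ] g (r • n) = _
  rw [map_smul]

private lemma rel_le_map_id_right {f : M →ₗ[Rᵐᵒᵖ] M'} (hf : Function.Surjective f) :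
    rel R M' N ≤ (rel R M N).map (intMap f (LinearMap.id : N →ₗ[R] N)).toAddMonoidHom := by
  rw [rel, AddSubgroup.closure_le]
  rintro x ⟨r, m', n, rfl⟩
  obtain ⟨m, rfl⟩ := hf m'
  refine ⟨_, AddSubgroup.subset_closure ⟨r, m, n, rfl⟩, ?_⟩
  rw [map_sub]
  show f (MulOpposite.op r • m) ⊗ₜ[ℤ] n - f m ⊗ₜ[ℤ] (r • n) = _
  rw [map_smul]

/-- Right exactness of `M ⊗_R -`. -/
lemma exact_tmap_id_left {g : N →ₗ[R] N'} {g' : N' →ₗ[R] N''} (h : Function.Exact g g')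
    (hg' : Function.Surjective g') :
    Function.Exact (tmap (LinearMap.id : M →ₗ[Rᵐᵒᵖ] M) g) (tmap LinearMap.id g') := by
  refine fun x => ⟨fun hx => ?_, ?_⟩
  · obtain ⟨z, rfl⟩ := mk_surjective x
    obtain ⟨w, hw, hwz⟩ := rel_le_map_id_left hg' (mk_eq_zero_iff.mp hx)
    -- `z - w` is killed by `M ⊗[ℤ] g'`, where right exactness is known
    have hzw : intMap (LinearMap.id : M →ₗ[Rᵐᵒᵖ] M) g' (z - w) = 0 := by
      rw [map_sub, show intMap LinearMap.id g' w = intMap LinearMap.id g' z from hwz, sub_self]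
    rw [intMap_id_left] at hzw
    obtain ⟨v, hv⟩ := (lTensor_exact M (f := g.toAddMonoidHom.toIntLinearMap)
      (g := g'.toAddMonoidHom.toIntLinearMap) h hg' _).mp hzw
    refine ⟨mk v, ?_⟩
    rw [tmap_mk, show intMap LinearMap.id g v = z - w from
      (congrArg (· v) (intMap_id_left g)).trans hv, map_sub, mk_eq_zero_iff.mpr hw, sub_zero]
  · rintro ⟨y, rfl⟩
    exact tmap_tmap_id_left_eq_zero h.linearMap_comp_eq_zero y

/-- Right exactness of `- ⊗_R N`. -/
lemma exact_tmap_id_right {f : M →ₗ[Rᵐᵒᵖ] M'} {f' : M' →ₗ[Rᵐᵒᵖ] M''}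
    (h : Function.Exact f f') (hf' : Function.Surjective f') :
    Function.Exact (tmap f (LinearMap.id : N →ₗ[R] N)) (tmap f' LinearMap.id) := by
  refine fun x => ⟨fun hx => ?_, ?_⟩
  · obtain ⟨z, rfl⟩ := mk_surjective x
    obtain ⟨w, hw, hwz⟩ := rel_le_map_id_right hf' (mk_eq_zero_iff.mp hx)
    have hzw : intMap f' (LinearMap.id : N →ₗ[R] N) (z - w) = 0 := by
      rw [map_sub, show intMap f' LinearMap.id w = intMap f' LinearMap.id z from hwz, sub_self]
    rw [intMap_id_right] at hzw
    obtain ⟨v, hv⟩ := (rTensor_exact N (f := f.toAddMonoidHom.toIntLinearMap)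
      (g := f'.toAddMonoidHom.toIntLinearMap) h hf' _).mp hzw
    refine ⟨mk v, ?_⟩
    rw [tmap_mk, show intMap f LinearMap.id v = z - w from
      (congrArg (· v) (intMap_id_right f)).trans hv, map_sub, mk_eq_zero_iff.mpr hw, sub_zero]
  · rintro ⟨y, rfl⟩
    exact tmap_tmap_id_right_eq_zero h.linearMap_comp_eq_zero y

lemma FlatLeft.exact_tmap_id_right (hN : FlatLeft R N) {f : M →ₗ[Rᵐᵒᵖ] M'}
    {f' : M' →ₗ[Rᵐᵒᵖ] M''} (h : Function.Exact f f') :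
    Function.Exact (tmap f (LinearMap.id : N →ₗ[R] N)) (tmap f' LinearMap.id) := by
  have hrange : Function.Exact (tmap (LinearMap.range f).subtype (LinearMap.id : N →ₗ[R] N))
      (tmap f'.rangeRestrict LinearMap.id) :=
    NCT.exact_tmap_id_right h.linearMap_rangeRestrict f'.surjective_rangeRestrict
  refine fun x => ⟨fun hx => ?_, ?_⟩
  · have hx' : tmap f'.rangeRestrict LinearMap.id x = 0 := by
      refine hN _ _ _ (LinearMap.range f').injective_subtype ?_
      rw [tmap_tmap, LinearMap.id_comp, map_zero]
      exact hx
    obtain ⟨y, rfl⟩ := (hrange x).mp hx'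
    obtain ⟨z, rfl⟩ := tmap_id_right_surjective f.surjective_rangeRestrict y
    exact ⟨z, by rw [tmap_tmap, LinearMap.id_comp]; rfl⟩
  · rintro ⟨y, rfl⟩
    exact tmap_tmap_id_right_eq_zero h.linearMap_comp_eq_zero y

lemma leftInverse_tmap_id_symm (e : N ≃ₗ[R] N') :
    Function.LeftInverse (tmap (LinearMap.id : M →ₗ[Rᵐᵒᵖ] M) (e.symm : N' →ₗ[R] N))
      (tmap LinearMap.id (e : N →ₗ[R] N')) := fun x => by
  rw [tmap_tmap, LinearMap.id_comp, LinearEquiv.comp_coe, LinearEquiv.self_trans_symm,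
    LinearEquiv.refl_toLinearMap, tmap_id_apply]

lemma FlatLeft.of_linearEquiv (e : N ≃ₗ[R] N') (hN : FlatLeft R N) : FlatLeft R N' := by
  intro P P' _ _ _ _ f hf
  have hconj : ⇑(tmap f (LinearMap.id : N' →ₗ[R] N')) =
      tmap LinearMap.id (e : N →ₗ[R] N') ∘ tmap f LinearMap.id ∘
        tmap LinearMap.id (e.symm : N' →ₗ[R] N) := by
    ext x
    rw [Function.comp_apply, Function.comp_apply, tmap_comm]
    exact congrArg _ (leftInverse_tmap_id_symm (M := P) e.symm x).symm
  rw [hconj]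
  exact (leftInverse_tmap_id_symm (M := P') e).injective.comp
    ((hN P P' f hf).comp (leftInverse_tmap_id_symm (M := P) e.symm).injective)

end NCT

open NCT

universe v

namespace CochainComplex

lemma exactAt_iff_function_exact_ab (C : CochainComplex AddCommGrpCat.{v} ℤ) {i j k : ℤ}
    (hij : i + 1 = j) (hjk : j + 1 = k) : C.ExactAt j ↔ Function.Exact (C.d i j) (C.d j k) := by
  rw [C.exactAt_iff' i j k (by rw [prev]; omega) (by rw [next]; omega),
    ShortComplex.ab_exact_iff_function_exact]
  rfl

lemma exactAt_iff_function_exact_moduleCat {S : Type*} [Ring S]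
    (C : CochainComplex (ModuleCat.{v} S) ℤ) {i j k : ℤ} (hij : i + 1 = j) (hjk : j + 1 = k) :
    C.ExactAt j ↔ Function.Exact (C.d i j).hom (C.d j k).hom := by
  rw [C.exactAt_iff' i j k (by rw [prev]; omega) (by rw [next]; omega),
    ShortComplex.ShortExact.moduleCat_exact_iff_function_exact]
  rfl

end CochainComplex

variable {R : Type u} [Ring R]

lemma exactAt_tensCplx_of_flatLeft {Fc : CochainComplex (ModuleCat.{u} Rᵐᵒᵖ) ℤ} {n : ℤ}
    (hFc : Fc.ExactAt n) {N : ModuleCat.{u} R} (hN : FlatLeft R N) :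
    (tensCplx Fc N).ExactAt n := by
  rw [CochainComplex.exactAt_iff_function_exact_moduleCat _ (sub_add_cancel n 1) rfl] at hFc
  rw [CochainComplex.exactAt_iff_function_exact_ab _ (sub_add_cancel n 1) rfl]
  exact hN.exact_tmap_id_right hFc

def tensCplxFunctor (Fc : CochainComplex (ModuleCat.{u} Rᵐᵒᵖ) ℤ) :
    ModuleCat.{u} R ⥤ CochainComplex AddCommGrpCat.{u} ℤ where
  obj N := tensCplx Fc N
  map g := (NatTrans.mapHomologicalComplex ((tensorBifunctor R).flip.map g) _).app Fc
  map_id N := by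
    ext n x
    exact tmap_id_apply x
  map_comp {N _ _} g g' := by
    ext n (x : Tens R (Fc.X n) N)
    show tmap LinearMap.id (g'.hom.comp g.hom) x
      = tmap LinearMap.id g'.hom (tmap LinearMap.id g.hom x)
    rw [tmap_tmap, LinearMap.id_comp]

instance (Fc : CochainComplex (ModuleCat.{u} Rᵐᵒᵖ) ℤ) :
    (tensCplxFunctor (R := R) Fc).PreservesZeroMorphisms where
  map_zero N N' := by
    ext n x
    show tmap LinearMap.id (0 : N →ₗ[R] N') x = 0
    rw [tmap_zero_right]
    rfl

lemma shortExact_map_tensCplxFunctor {Fc : CochainComplex (ModuleCat.{u} Rᵐᵒᵖ) ℤ}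
    (hflat : ∀ n : ℤ, FlatRight R (Fc.X n)) {S : ShortComplex (ModuleCat.{u} R)}
    (hS : S.ShortExact) : (S.map (tensCplxFunctor Fc)).ShortExact := by
  refine HomologicalComplex.shortExact_of_degreewise_shortExact _ fun n =>
    ShortComplex.ShortExact.mk' ?_ ?_ ?_
  · rw [ShortComplex.ab_exact_iff_function_exact]
    exact exact_tmap_id_left
      ((ShortComplex.ShortExact.moduleCat_exact_iff_function_exact S).mp hS.exact)
      hS.moduleCat_surjective_g
  · rw [AddCommGrpCat.mono_iff_injective]
    exact hflat n _ _ _ hS.moduleCat_injective_f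
  · rw [AddCommGrpCat.epi_iff_surjective]
    exact tmap_id_left_surjective hS.moduleCat_surjective_g

lemma exactAt_tensCplx_of_shortExact {Fc : CochainComplex (ModuleCat.{u} Rᵐᵒᵖ) ℤ}
    (hflat : ∀ n : ℤ, FlatRight R (Fc.X n)) {S : ShortComplex (ModuleCat.{u} R)}
    (hS : S.ShortExact) {n : ℤ} (h₂ : (tensCplx Fc S.X₂).ExactAt n)
    (h₁ : (tensCplx Fc S.X₁).ExactAt (n + 1)) : (tensCplx Fc S.X₃).ExactAt n := by
  rw [HomologicalComplex.exactAt_iff_isZero_homology] at h₁ h₂ ⊢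
  exact ((shortExact_map_tensCplxFunctor hflat hS).homology_exact₃ n (n + 1) rfl).isZero_X₂
    (h₂.eq_of_src _ _) (h₁.eq_of_tgt _ _)

/-- `HasFiniteFlatDimension` with the length of the resolution fixed. -/
def HasFlatDimensionLE (R : Type u) [Ring R] (m : ℕ) (J : Type u) [AddCommGroup J]
    [Module R J] : Prop :=
  ∃ (G : ℕ → ModuleCat.{u} R) (d : ∀ n : ℕ, G (n + 1) ⟶ G n) (ε : G 0 ⟶ ModuleCat.of R J),
    (∀ n, FlatLeft R (G n)) ∧
    Function.Surjective ε ∧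
    LinearMap.range (d 0).hom = LinearMap.ker ε.hom ∧
    (∀ n, LinearMap.range (d (n + 1)).hom = LinearMap.ker (d n).hom) ∧
    (∀ n, m < n → Subsingleton (G n))

section FlatDimension

variable {J : Type u} [AddCommGroup J] [Module R J]

lemma HasFlatDimensionLE.flatLeft (h : HasFlatDimensionLE R 0 J) : FlatLeft R J := by
  obtain ⟨G, d, ε, hG, hε, h0, -, hbound⟩ := h
  have : Subsingleton (G 1) := hbound 1 one_pos
  have hker : LinearMap.ker ε.hom = ⊥ := by
    rw [← h0, LinearMap.range_eq_bot]
    exact LinearMap.ext fun x => by rw [Subsingleton.elim x 0, map_zero, LinearMap.zero_apply]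
  exact (hG 0).of_linearEquiv
    (LinearEquiv.ofBijective ε.hom ⟨LinearMap.ker_eq_bot.mp hker, hε⟩)

lemma HasFlatDimensionLE.exists_syzygy {m : ℕ} (h : HasFlatDimensionLE R (m + 1) J) :
    ∃ (G : ModuleCat.{u} R) (ε : G →ₗ[R] J), Function.Surjective ε ∧ FlatLeft R G ∧
      HasFlatDimensionLE R m (LinearMap.ker ε) := by
  obtain ⟨G, d, ε, hG, hε, h0, hd, hbound⟩ := h
  refine ⟨G 0, ε.hom, hε, hG 0, fun k => G (k + 1), fun k => d (k + 1),
    ModuleCat.ofHom ((d 0).hom.codRestrict _ fun y => h0 ▸ LinearMap.mem_range_self _ y),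
    fun k => hG (k + 1), ?_, ?_, fun k => hd (k + 1), fun k hk => hbound (k + 1) (by omega)⟩
  · rintro ⟨z, hz⟩
    obtain ⟨y, rfl⟩ := h0 ▸ hz
    exact ⟨y, rfl⟩
  · rw [ModuleCat.hom_ofHom, LinearMap.ker_codRestrict]
    exact hd 0

end FlatDimension

lemma exactAt_tensCplx_of_hasFlatDimensionLE {Fc : CochainComplex (ModuleCat.{u} Rᵐᵒᵖ) ℤ}
    (hacyclic : ∀ n : ℤ, Fc.ExactAt n) (hflat : ∀ n : ℤ, FlatRight R (Fc.X n)) (m : ℕ) :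
    ∀ {J : Type u} [AddCommGroup J] [Module R J], HasFlatDimensionLE R m J →
      ∀ n : ℤ, (tensCplx Fc (ModuleCat.of R J)).ExactAt n := by
  induction m with
  | zero => exact fun hJ n => exactAt_tensCplx_of_flatLeft (hacyclic n) hJ.flatLeft
  | succ m ih =>
    intro J _ _ hJ n
    obtain ⟨G, ε, hε, hG, hK⟩ := hJ.exists_syzygy
    exact exactAt_tensCplx_of_shortExact hflat (LinearMap.shortExact_shortComplexKer hε)
      (exactAt_tensCplx_of_flatLeft (hacyclic n) hG) (ih hK (n + 1))

/-- **Acyclic complexes of flats are F-totally acyclic over "Gorenstein" rings.**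
Let `R` be a ring such that every injective left `R`-module has finite flat dimension.
Then every acyclic complex `F^•` of flat right `R`-modules is F-totally acyclic, i.e.
`F^• ⊗_R J` is acyclic for every injective left `R`-module `J`. -/
theorem F_totally_acyclic_of_acyclic_of_flat_terms
    (R : Type u) [Ring R]
    (hGor : ∀ (J : Type u) [AddCommGroup J] [Module R J], Module.Injective R J →
      HasFiniteFlatDimension R J)
    (Fc : CochainComplex (ModuleCat.{u} Rᵐᵒᵖ) ℤ)
    (hacyclic : ∀ n : ℤ, Fc.ExactAt n)
    (hflat : ∀ n : ℤ, NCT.FlatRight R (Fc.X n)) :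
    ∀ (J : ModuleCat.{u} R), Module.Injective R J →
      ∀ n : ℤ, (tensCplx Fc J).ExactAt n := by
  intro J hJ
  obtain ⟨m, hm⟩ := hGor J hJ
  exact exactAt_tensCplx_of_hasFlatDimensionLE hacyclic hflat m hm
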